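/- Let r ∈ [0, ∞). For every natural number n ≥ 1, the sequences a_n(r) and b_n(r) satisfy 0 ≤ a_n(r) < a_{n+1}(r), a_{n+1}(r) < b_{n+1}(r) < b_n(r), and b_n(r) ≤ 1/Γ(r+1); in particular, {a_n(r)} is strictly increasing, {b_n(r)} is strictly decreasing, every a_m(r) is less than every b_n(r), and all terms lie in [0, 1/Γ(r+1)]. -/

import Mathlib

open MeasureTheory Filter Topology

/-- The digamma function `ψ(x) = Γ'(x)/Γ(x)`. -/
noncomputable def digamma (x : ℝ) : ℝ := deriv Real.Gamma x / Real.Gamma x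

/-- The rising factorial `x^{r̄} = Γ(x+r)/Γ(x)`. -/
noncomputable def rise (x r : ℝ) : ℝ := Real.Gamma (x + r) / Real.Gamma x

/-- The analytic extension of the hyperharmonic numbers:
`h_x^{(r)} = (x^{r̄}/(x Γ(r)))(ψ(x+r) − ψ(r))` for `r > 0`, and `h_x^{(0)} = 1/x`. -/
noncomputable def hyp (r x : ℝ) : ℝ :=
  if r = 0 then 1 / x
  else rise x r / (x * Real.Gamma r) * (digamma (x + r) - digamma r)

/-- `y_n(r) = ∑_{k=1}^n h_k^{(r)}/k^r − ∫_1^n h_x^{(r)}/x^r dx`. -/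
noncomputable def yseq (r : ℝ) (n : ℕ) : ℝ :=
  ∑ k ∈ Finset.Icc 1 n, hyp r k / (k : ℝ) ^ r - ∫ x in (1:ℝ)..(n:ℝ), hyp r x / x ^ r

/-- `z_n(r) = ∑_{k=1}^{n-1} h_k^{(r)}/k^r − ∫_1^n h_x^{(r)}/x^r dx`. -/
noncomputable def zseq (r : ℝ) (n : ℕ) : ℝ :=
  ∑ k ∈ Finset.Icc 1 (n - 1), hyp r k / (k : ℝ) ^ r - ∫ x in (1:ℝ)..(n:ℝ), hyp r x / x ^ r

/-- `b_n(r) = ∑_{k=1}^n h_k^{(r)}/k^{r̄} − ∫_1^n h_x^{(r)}/x^{r̄} dx`. -/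
noncomputable def bseq (r : ℝ) (n : ℕ) : ℝ :=
  ∑ k ∈ Finset.Icc 1 n, hyp r k / rise k r - ∫ x in (1:ℝ)..(n:ℝ), hyp r x / rise x r

/-- `a_n(r) = ∑_{k=1}^{n-1} h_k^{(r)}/k^{r̄} − ∫_1^n h_x^{(r)}/x^{r̄} dx`. -/
noncomputable def aseq (r : ℝ) (n : ℕ) : ℝ :=
  ∑ k ∈ Finset.Icc 1 (n - 1), hyp r k / rise k r - ∫ x in (1:ℝ)..(n:ℝ), hyp r x / rise x r

/-! For `r > 0`, the recurrence `ψ(x + 1) = ψ(x) + 1/x` and the monotonicity of `ψ` (log-convexity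
of `Γ`) telescope to `ψ(x + r) - ψ(r) = x ∑ₖ 1/((r + k)(x + r + k))`. Hence
`f(x) = h_x^{(r)}/x^{r̄} = ∑ₖ 1/(Γ(r)(r + k)(x + r + k))` is positive and strictly decreasing, and
`f(1) = 1/Γ(r + 1)`; for `r = 0`, `f(x) = 1/x`. A strictly decreasing `f` satisfies
`f(n + 1) < ∫ₙⁿ⁺¹ f < f(n)`, which is exactly `a_n < a_{n+1}` and `b_{n+1} < b_n`, while
`b_n - a_n = f(n) > 0`, `a_1 = 0` and `b_1 = f(1)`. -/

open Real Set Filter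

lemma ne_neg_natCast_of_pos {x : ℝ} (hx : 0 < x) (m : ℕ) : x ≠ -m :=
  ((neg_nonpos.2 m.cast_nonneg).trans_lt hx).ne'

lemma digamma_add_one {x : ℝ} (hx : ∀ m : ℕ, x ≠ -m) : digamma (x + 1) = digamma x + 1 / x := by
  have hx0 : x ≠ 0 := by simpa using hx 0
  have hΓ : Gamma x ≠ 0 := Gamma_ne_zero hx
  have hderiv : deriv Gamma (x + 1) = Gamma x + x * deriv Gamma x := by
    rw [← deriv_comp_add_const]
    have hfeq : (fun y => Gamma (y + 1)) =ᶠ[𝓝 x] fun y => y * Gamma y := by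
      filter_upwards [isOpen_ne.mem_nhds hx0] with y hy using Gamma_add_one hy
    rw [hfeq.deriv_eq, deriv_fun_mul differentiableAt_fun_id (differentiableAt_Gamma hx)]
    simp
  rw [digamma, digamma, hderiv, Gamma_add_one hx0]
  field_simp
  ring

lemma digamma_add_nat {x : ℝ} (hx : 0 < x) (n : ℕ) :
    digamma (x + n) = digamma x + ∑ k ∈ Finset.range n, 1 / (x + k) := by
  induction n with
  | zero => simp
  | succ n ih =>
    have hxn : 0 < x + n := by positivity
    rw [Nat.cast_succ, ← add_assoc, digamma_add_one (ne_neg_natCast_of_pos hxn),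
      ih, Finset.sum_range_succ, add_assoc]

lemma digamma_eq_deriv_log_Gamma {x : ℝ} (hx : 0 < x) : digamma x = deriv (log ∘ Gamma) x := by
  rw [digamma, Function.comp_def,
    deriv.log (differentiableAt_Gamma (ne_neg_natCast_of_pos hx)) (Gamma_pos_of_pos hx).ne']

lemma monotoneOn_digamma : MonotoneOn digamma (Ioi 0) := by
  have hmono := convexOn_log_Gamma.monotoneOn_deriv fun x (hx : 0 < x) =>
    (differentiableAt_Gamma (ne_neg_natCast_of_pos hx)).log (Gamma_pos_of_pos hx).ne'
  intro x hx y hy hxy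
  rw [digamma_eq_deriv_log_Gamma hx, digamma_eq_deriv_log_Gamma hy]
  exact hmono hx hy hxy

lemma tendsto_digamma_add_nat_sub {s t : ℝ} (hs : 0 < s) (hst : s ≤ t) :
    Tendsto (fun n : ℕ => digamma (t + n) - digamma (s + n)) atTop (𝓝 0) := by
  obtain ⟨m, hm⟩ := exists_nat_ge (t - s)
  have hbound : ∀ n : ℕ, digamma (t + n) - digamma (s + n) ≤ m / (s + n) := by
    intro n
    have hsn : 0 < s + n := by positivity
    have hle : digamma (t + n) ≤ digamma (s + n + m) :=
      monotoneOn_digamma (show 0 < t + n by linarith) (show 0 < s + n + m by positivity)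
        (by linarith)
    have hsum : ∑ k ∈ Finset.range m, 1 / (s + n + k) ≤ m / (s + n) := by
      calc ∑ k ∈ Finset.range m, 1 / (s + n + k)
          ≤ ∑ _k ∈ Finset.range m, 1 / (s + n) :=
            Finset.sum_le_sum fun k _ => one_div_le_one_div_of_le hsn (by simp)
        _ = m / (s + n) := by rw [Finset.sum_const, Finset.card_range, nsmul_eq_mul, mul_one_div]
    rw [digamma_add_nat hsn] at hle
    linarith
  have hlower (n : ℕ) : 0 ≤ digamma (t + n) - digamma (s + n) := by
    have hsn : 0 < s + n := by positivity
    exact sub_nonneg.2 (monotoneOn_digamma hsn (show 0 < t + n by linarith) (by linarith))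
  have hlim : Tendsto (fun n : ℕ => (m : ℝ) / (s + n)) atTop (𝓝 0) :=
    tendsto_const_nhds.div_atTop (tendsto_atTop_add_const_left _ s tendsto_natCast_atTop_atTop)
  exact tendsto_of_tendsto_of_tendsto_of_le_of_le tendsto_const_nhds hlim hlower hbound

lemma hasSum_digamma_sub {s t : ℝ} (hs : 0 < s) (hst : s ≤ t) :
    HasSum (fun k : ℕ => 1 / (s + k) - 1 / (t + k)) (digamma t - digamma s) := by
  have hnonneg (k : ℕ) : 0 ≤ 1 / (s + k) - 1 / (t + k) :=
    sub_nonneg.2 (one_div_le_one_div_of_le (by positivity) (by linarith))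
  rw [hasSum_iff_tendsto_nat_of_nonneg hnonneg]
  have hpartial (n : ℕ) : ∑ k ∈ Finset.range n, (1 / (s + k) - 1 / (t + k)) =
      digamma t - digamma s - (digamma (t + n) - digamma (s + n)) := by
    rw [Finset.sum_sub_distrib, digamma_add_nat hs, digamma_add_nat (hs.trans_le hst)]
    ring
  simpa only [hpartial, sub_zero] using
    tendsto_const_nhds.sub (tendsto_digamma_add_nat_sub hs hst)

section IntegralComparison

variable {f : ℝ → ℝ} {a b : ℝ}

lemma StrictAntiOn.integral_lt_mul_apply_left (hf : StrictAntiOn f (Icc a b)) (hab : a < b) :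
    ∫ x in a..b, f x < (b - a) * f a := by
  have hint : IntervalIntegrable f volume a b :=
    (hf.antitoneOn.mono (uIcc_of_le hab.le).le).intervalIntegrable
  have hpos : 0 < ∫ x in a..b, (f a - f x) :=
    intervalIntegral.intervalIntegral_pos_of_pos_on (intervalIntegrable_const.sub hint)
      (fun x hx => sub_pos.2 (hf (left_mem_Icc.2 hab.le) (Ioo_subset_Icc_self hx) hx.1)) hab
  rw [intervalIntegral.integral_sub intervalIntegrable_const hint,
    intervalIntegral.integral_const, smul_eq_mul] at hpos
  linarith

lemma StrictAntiOn.mul_apply_right_lt_integral (hf : StrictAntiOn f (Icc a b)) (hab : a < b) :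
    (b - a) * f b < ∫ x in a..b, f x := by
  have hint : IntervalIntegrable f volume a b :=
    (hf.antitoneOn.mono (uIcc_of_le hab.le).le).intervalIntegrable
  have hpos : 0 < ∫ x in a..b, (f x - f b) :=
    intervalIntegral.intervalIntegral_pos_of_pos_on (hint.sub intervalIntegrable_const)
      (fun x hx => sub_pos.2 (hf (Ioo_subset_Icc_self hx) (right_mem_Icc.2 hab.le) hx.2)) hab
  rw [intervalIntegral.integral_sub hint intervalIntegrable_const,
    intervalIntegral.integral_const, smul_eq_mul] at hpos
  linarith

end IntegralComparison

noncomputable def hypRatio (r x : ℝ) : ℝ := hyp r x / rise x r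

lemma rise_pos {x r : ℝ} (hx : 0 < x) (hxr : 0 < x + r) : 0 < rise x r :=
  div_pos (Gamma_pos_of_pos hxr) (Gamma_pos_of_pos hx)

lemma hypRatio_zero_left {x : ℝ} (hx : 0 < x) : hypRatio 0 x = 1 / x := by
  rw [hypRatio, hyp, if_pos rfl, rise, add_zero, div_self (Gamma_pos_of_pos hx).ne', div_one]

lemma hypRatio_eq_of_pos {r x : ℝ} (hr : 0 < r) (hx : 0 < x) :
    hypRatio r x = (digamma (x + r) - digamma r) / (x * Gamma r) := by
  have hrise := (rise_pos (r := r) hx (by linarith)).ne'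
  rw [hypRatio, hyp, if_neg hr.ne']
  field_simp

lemma hasSum_hypRatio {r x : ℝ} (hr : 0 < r) (hx : 0 < x) :
    HasSum (fun k : ℕ => 1 / (Gamma r * ((r + k) * (x + r + k)))) (hypRatio r x) := by
  rw [hypRatio_eq_of_pos hr hx]
  refine ((hasSum_digamma_sub hr (by linarith : r ≤ x + r)).div_const (x * Gamma r)).congr_fun ?_
  intro k
  have hΓ := (Gamma_pos_of_pos hr).ne'
  have hxrk : 0 < x + r + k := by positivity
  field_simp
  ring

lemma hypRatio_pos {r x : ℝ} (hr : 0 ≤ r) (hx : 0 < x) : 0 < hypRatio r x := by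
  rcases hr.eq_or_lt with rfl | hr
  · rw [hypRatio_zero_left hx]
    positivity
  · have hΓ := Gamma_pos_of_pos hr
    refine hasSum_lt (f := 0) (i := 0) (fun k => ?_) ?_ hasSum_zero (hasSum_hypRatio hr hx) <;>
      simp only [Pi.zero_apply] <;> positivity

lemma strictAntiOn_hypRatio {r : ℝ} (hr : 0 ≤ r) : StrictAntiOn (hypRatio r) (Ioi 0) := by
  intro x (hx : 0 < x) y (hy : 0 < y) hxy
  rcases hr.eq_or_lt with rfl | hr
  · rw [hypRatio_zero_left hx, hypRatio_zero_left hy]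
    exact one_div_lt_one_div_of_lt hx hxy
  · have hΓ := Gamma_pos_of_pos hr
    refine hasSum_lt (i := 0) (fun k => ?_) ?_ (hasSum_hypRatio hr hy) (hasSum_hypRatio hr hx)
    · gcongr
    · simp only [Nat.cast_zero, add_zero]
      gcongr

lemma hypRatio_one {r : ℝ} (hr : 0 ≤ r) : hypRatio r 1 = 1 / Gamma (r + 1) := by
  rcases hr.eq_or_lt with rfl | hr
  · rw [hypRatio_zero_left one_pos, zero_add, Gamma_one]
  · rw [hypRatio_eq_of_pos hr one_pos, add_comm 1 r, digamma_add_one (ne_neg_natCast_of_pos hr),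
      Gamma_add_one hr.ne']
    have := (Gamma_pos_of_pos hr).ne'
    field_simp
    ring

section Sequences

variable {r : ℝ}

lemma aseq_eq_sum_hypRatio (r : ℝ) (n : ℕ) :
    aseq r n = ∑ k ∈ Finset.Icc 1 (n - 1), hypRatio r k - ∫ x in (1 : ℝ)..n, hypRatio r x :=
  rfl

lemma bseq_eq_sum_hypRatio (r : ℝ) (n : ℕ) :
    bseq r n = ∑ k ∈ Finset.Icc 1 n, hypRatio r k - ∫ x in (1 : ℝ)..n, hypRatio r x :=
  rfl

lemma intervalIntegrable_hypRatio (hr : 0 ≤ r) {a b : ℝ} (ha : 0 < a) (hb : 0 < b) :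
    IntervalIntegrable (hypRatio r) volume a b :=
  ((strictAntiOn_hypRatio hr).antitoneOn.mono fun _ hx =>
    (lt_min ha hb).trans_le hx.1).intervalIntegrable

lemma bseq_sub_aseq (r : ℝ) {n : ℕ} (hn : 1 ≤ n) : bseq r n - aseq r n = hypRatio r n := by
  obtain ⟨m, rfl⟩ := Nat.exists_eq_add_of_le' hn
  rw [bseq_eq_sum_hypRatio, aseq_eq_sum_hypRatio, Nat.add_sub_cancel,
    Finset.sum_Icc_succ_top (by omega)]
  ring

lemma bseq_succ (hr : 0 ≤ r) {n : ℕ} (hn : 1 ≤ n) :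
    bseq r (n + 1) = bseq r n + (hypRatio r (n + 1) - ∫ x in (n : ℝ)..n + 1, hypRatio r x) := by
  have hn' : (1 : ℝ) ≤ n := by exact_mod_cast hn
  have hsplit := intervalIntegral.integral_add_adjacent_intervals
    (intervalIntegrable_hypRatio hr one_pos (by linarith : (0 : ℝ) < n))
    (intervalIntegrable_hypRatio hr (by linarith) (by linarith : (0 : ℝ) < n + 1))
  rw [bseq_eq_sum_hypRatio, bseq_eq_sum_hypRatio, Finset.sum_Icc_succ_top (by omega),
    Nat.cast_succ, ← hsplit]
  ring

lemma aseq_succ (hr : 0 ≤ r) {n : ℕ} (hn : 1 ≤ n) :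
    aseq r (n + 1) = aseq r n + (hypRatio r n - ∫ x in (n : ℝ)..n + 1, hypRatio r x) := by
  have h := bseq_sub_aseq r (Nat.le_succ_of_le hn)
  rw [bseq_succ hr hn, Nat.cast_succ] at h
  linarith [bseq_sub_aseq r hn]

lemma strictAntiOn_hypRatio_Icc (hr : 0 ≤ r) {n : ℕ} (hn : 1 ≤ n) :
    StrictAntiOn (hypRatio r) (Icc (n : ℝ) (n + 1)) :=
  (strictAntiOn_hypRatio hr).mono fun _ hx =>
    (show (0 : ℝ) < n by exact_mod_cast hn).trans_le hx.1

lemma aseq_lt_aseq_succ (hr : 0 ≤ r) {n : ℕ} (hn : 1 ≤ n) : aseq r n < aseq r (n + 1) := by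
  have h := (strictAntiOn_hypRatio_Icc hr hn).integral_lt_mul_apply_left (lt_add_one _)
  rw [add_sub_cancel_left, one_mul] at h
  rw [aseq_succ hr hn]
  linarith

lemma bseq_succ_lt_bseq (hr : 0 ≤ r) {n : ℕ} (hn : 1 ≤ n) : bseq r (n + 1) < bseq r n := by
  have h := (strictAntiOn_hypRatio_Icc hr hn).mul_apply_right_lt_integral (lt_add_one _)
  rw [add_sub_cancel_left, one_mul] at h
  rw [bseq_succ hr hn]
  linarith

lemma aseq_lt_bseq (hr : 0 ≤ r) {n : ℕ} (hn : 1 ≤ n) : aseq r n < bseq r n := by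
  have h := bseq_sub_aseq r hn
  linarith [hypRatio_pos hr (show (0 : ℝ) < n by exact_mod_cast hn)]

lemma aseq_le_aseq (hr : 0 ≤ r) {m n : ℕ} (hm : 1 ≤ m) (hmn : m ≤ n) : aseq r m ≤ aseq r n := by
  induction n, hmn using Nat.le_induction with
  | base => exact le_rfl
  | succ n hmn ih => exact ih.trans (aseq_lt_aseq_succ hr (hm.trans hmn)).le

lemma bseq_le_bseq (hr : 0 ≤ r) {m n : ℕ} (hm : 1 ≤ m) (hmn : m ≤ n) : bseq r n ≤ bseq r m := by
  induction n, hmn using Nat.le_induction with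
  | base => exact le_rfl
  | succ n hmn ih => exact (bseq_succ_lt_bseq hr (hm.trans hmn)).le.trans ih

lemma aseq_one (r : ℝ) : aseq r 1 = 0 := by
  simp [aseq]

lemma bseq_one (hr : 0 ≤ r) : bseq r 1 = 1 / Gamma (r + 1) := by
  simp [bseq_eq_sum_hypRatio, hypRatio_one hr]

end Sequences

theorem ab_monotone (r : ℝ) (hr : 0 ≤ r) :
    (∀ n : ℕ, 1 ≤ n →
      0 ≤ aseq r n ∧ aseq r n < aseq r (n + 1) ∧
      aseq r (n + 1) < bseq r (n + 1) ∧ bseq r (n + 1) < bseq r n ∧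
      bseq r n ≤ 1 / Real.Gamma (r + 1)) ∧
    (∀ m n : ℕ, 1 ≤ m → 1 ≤ n → aseq r m < bseq r n) := by
  refine ⟨fun n hn => ⟨?_, aseq_lt_aseq_succ hr hn, aseq_lt_bseq hr (by omega),
    bseq_succ_lt_bseq hr hn, ?_⟩, fun m n hm hn => ?_⟩
  · simpa only [aseq_one] using aseq_le_aseq hr le_rfl hn
  · simpa only [bseq_one hr] using bseq_le_bseq hr le_rfl hn
  · calc aseq r m ≤ aseq r (max m n) := aseq_le_aseq hr hm (le_max_left m n)
      _ < bseq r (max m n) := aseq_lt_bseq hr (hm.trans (le_max_left m n))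
      _ ≤ bseq r n := bseq_le_bseq hr hn (le_max_right m n)
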